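/- arXiv:2007.02136 — 10 statements merged into one kernel-verified Lean document; each statement's English description precedes it below -/
import Mathlib

section
/- If V ⊆ G is clopen, b ∈ G, and every element of V is strictly less than b, then there exists N such that for all n ≥ N every element of V is strictly less than Π_n(b). -/
open Filter Topology

/-- Lemma `big`: if `V ⊆ G` is clopen, `b ∈ G`, and every element of `V` is
strictly less than `b`, then there exists `N` such that for all `n ≥ N` every
element of `V` is strictly less than `Πₙ(b)`.  `G` is a sequential Hausdorff
space with retractions `Πₙ : G → Gₙ` onto closed discrete subspaces,
`Πₙ(g) → g`, `Π₁(g) ≤ Π₂(g) ≤ ... ≤ g`, and every strictly increasing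
sequence either has all subsequences divergent or converges to its supremum. -/
theorem stmt_3 {G : Type*} [TopologicalSpace G] [SequentialSpace G] [T2Space G]
    [LinearOrder G]
    (Gn : ℕ → Set G) (hnested : ∀ n, Gn n ⊆ Gn (n + 1))
    (hclosed : ∀ n, IsClosed (Gn n))
    (hdiscrete : ∀ n, DiscreteTopology (Gn n))
    (P : ℕ → G → G)
    (hinto : ∀ n g, P n g ∈ Gn n)
    (hretr : ∀ n, ∀ g ∈ Gn n, P n g = g)
    (hconv : ∀ g : G, Tendsto (fun n => P n g) atTop (𝓝 g))
    (hmono : ∀ g : G, ∀ n, P n g ≤ P (n + 1) g)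
    (hle : ∀ g : G, ∀ n, P n g ≤ g)
    (hsup : ∀ s : ℕ → G, StrictMono s →
      (∀ φ : ℕ → ℕ, StrictMono φ → ¬ ∃ l : G, Tendsto (fun k => s (φ k)) atTop (𝓝 l)) ∨
      (∃ l : G, Tendsto s atTop (𝓝 l) ∧ IsLUB (Set.range s) l))
    (V : Set G) (hV : IsClopen V) (b : G) (hVb : ∀ v ∈ V, v < b) :
    ∃ N, ∀ n, N ≤ n → ∀ v ∈ V, v < P n b := by
  by_contra hcon
  push_neg at hcon
  have hchain : Monotone (fun n => P n b) := monotone_nat_of_le_succ (hmono b)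
  -- for every m there is a bad element of V
  have hfail : ∀ m, ∃ w ∈ V, P m b ≤ w := by
    intro m
    obtain ⟨n, hn, w, hwV, hw⟩ := hcon m
    exact ⟨w, hwV, (hchain hn).trans hw⟩
  choose v hvV hvle using hfail
  -- each P m b is strictly below b
  have hlt : ∀ m, P m b < b := by
    intro m
    rcases (hle b m).lt_or_eq with h | h
    · exact h
    · exact absurd ((h ▸ hvle m).trans_lt (hVb (v m) (hvV m))) (lt_irrefl b)
  -- claim A: the sequence P · b is never eventually constant
  have hA : ∀ m, ∃ n, P m b < P n b := by
    intro m
    by_contra hA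
    push_neg at hA
    have heq : ∀ n, m ≤ n → P n b = P m b := fun n hn => le_antisymm (hA n) (hchain hn)
    have hconst : Tendsto (fun n => P n b) atTop (𝓝 (P m b)) := by
      apply Tendsto.congr' _ tendsto_const_nhds
      filter_upwards [eventually_ge_atTop m] with n hn
      exact (heq n hn).symm
    exact (hlt m).ne (tendsto_nhds_unique hconst (hconv b))
  -- build a strictly increasing subsequence s of P · b
  set φ : ℕ → ℕ := fun j => Nat.rec 0 (fun _ prev => Classical.choose (hA prev)) j with hφdef
  have hφstep : ∀ j, P (φ j) b < P (φ (j + 1)) b := fun j => Classical.choose_spec (hA (φ j))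
  set s : ℕ → G := fun j => P (φ j) b with hsdef
  have hs : StrictMono s := strictMono_nat_of_lt_succ hφstep
  have hφmono : StrictMono φ := by
    apply strictMono_nat_of_lt_succ
    intro j
    by_contra h
    push_neg at h
    exact absurd (hchain h) (not_le.mpr (hφstep j))
  have hstend : Tendsto s atTop (𝓝 b) := (hconv b).comp hφmono.tendsto_atTop
  have hlub : IsLUB (Set.range s) b := by
    rcases hsup s hs with h | ⟨l, hl, hlub⟩
    · exact absurd ⟨b, hstend⟩ (h id strictMono_id)
    · rwa [tendsto_nhds_unique hl hstend] at hlub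
  -- claim B: anything below b is below some s j
  have hB : ∀ c, c < b → ∃ j, c < s j := by
    intro c hc
    by_contra h
    push_neg at h
    exact absurd (hlub.2 (fun x hx => by obtain ⟨j, hj⟩ := hx; exact hj ▸ h j)) (not_le.mpr hc)
  have hBv : ∀ m, ∃ j, v m < s j := fun m => hB _ (hVb _ (hvV m))
  -- interleave s-values and V-values
  set q : ℕ → ℕ := fun i => Nat.rec 0 (fun _ prev => Classical.choose (hBv (φ (prev + 1)))) i
    with hqdef
  have hqstep : ∀ i, v (φ (q i + 1)) < s (q (i + 1)) :=
    fun i => Classical.choose_spec (hBv (φ (q i + 1)))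
  set x : ℕ → G := fun i => if i % 2 = 0 then s (q (i / 2)) else v (φ (q (i / 2) + 1))
    with hxdef
  have hx1 : ∀ i, x (2 * i) = s (q i) := by
    intro i
    have h1 : (2 * i) % 2 = 0 := by omega
    have h2 : (2 * i) / 2 = i := by omega
    simp [hxdef, h1, h2]
  have hx2 : ∀ i, x (2 * i + 1) = v (φ (q i + 1)) := by
    intro i
    have h1 : (2 * i + 1) % 2 = 1 := by omega
    have h2 : (2 * i + 1) / 2 = i := by omega
    simp [hxdef, h1, h2]
  have hsv : ∀ i, s (q i) < v (φ (q i + 1)) := by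
    intro i
    exact (hs (Nat.lt_succ_self (q i))).trans_le (hvle (φ (q i + 1)))
  have hxmono : StrictMono x := by
    apply strictMono_nat_of_lt_succ
    intro i
    rcases Nat.even_or_odd i with ⟨k, hk⟩ | ⟨k, hk⟩
    · have hik : i = 2 * k := by omega
      subst hik
      rw [hx1, hx2]
      exact hsv k
    · subst hk
      have hik1 : 2 * k + 1 + 1 = 2 * (k + 1) := by omega
      rw [hik1, hx1, hx2]
      exact hqstep k
  have hqmono : StrictMono q := by
    apply strictMono_nat_of_lt_succ
    intro i
    exact hs.lt_iff_lt.mp ((hsv i).trans (hqstep i))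
  have h2mono : StrictMono (fun i : ℕ => 2 * i) := fun a b h => by dsimp only; omega
  have h2mono' : StrictMono (fun i : ℕ => 2 * i + 1) := fun a b h => by dsimp only; omega
  have hxeven : Tendsto (fun i => x (2 * i)) atTop (𝓝 b) := by
    apply Tendsto.congr (fun i => (hx1 i).symm)
    exact hstend.comp hqmono.tendsto_atTop
  rcases hsup x hxmono with h | ⟨l, hl, _⟩
  · exact absurd ⟨b, hxeven⟩ (h (fun i => 2 * i) h2mono)
  · have hlb : l = b := tendsto_nhds_unique (hl.comp h2mono.tendsto_atTop) hxeven
    have hxodd : Tendsto (fun i => x (2 * i + 1)) atTop (𝓝 b) := by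
      rw [← hlb]
      exact hl.comp h2mono'.tendsto_atTop
    have hbV : b ∈ V := by
      apply hV.isClosed.mem_of_tendsto hxodd
      filter_upwards with i
      rw [hx2]
      exact hvV _
    exact absurd (hVb b hbV) (lt_irrefl b)
end

section
/- Every nonempty clopen subset U of G has a minimal element, and this minimal element lies in G_∞ = ∪_n G_n. -/
open Filter Topology

/-- Lemma `basic2`, first part: every nonempty clopen subset `U` of `G` has a
minimal element, and this minimal element lies in `G_∞ = ⋃ₙ Gₙ`. -/
theorem stmt_4 {G : Type*} [TopologicalSpace G] [SequentialSpace G] [T2Space G]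
    [LinearOrder G]
    (Gn : ℕ → Set G) (hnested : ∀ n, Gn n ⊆ Gn (n + 1))
    (hclosed : ∀ n, IsClosed (Gn n))
    (hdiscrete : ∀ n, DiscreteTopology (Gn n))
    (P : ℕ → G → G)
    (hinto : ∀ n g, P n g ∈ Gn n)
    (hretr : ∀ n, ∀ g ∈ Gn n, P n g = g)
    (hconv : ∀ g : G, Tendsto (fun n => P n g) atTop (𝓝 g))
    (hmono : ∀ g : G, ∀ n, P n g ≤ P (n + 1) g)
    (hle : ∀ g : G, ∀ n, P n g ≤ g)
    (hmin : ∀ B : Set G, IsClosed B → B.Nonempty → ∃ b ∈ B, ∀ x ∈ B, b ≤ x)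
    (U : Set G) (hU : IsClopen U) (hUne : U.Nonempty) :
    ∃ m ∈ U, (∀ x ∈ U, m ≤ x) ∧ m ∈ ⋃ n, Gn n := by
  obtain ⟨m, hmU, hmmin⟩ := hmin U hU.isClosed hUne
  refine ⟨m, hmU, hmmin, ?_⟩
  have hev : ∀ᶠ n in atTop, P n m ∈ U :=
    (hconv m).eventually (hU.isOpen.mem_nhds hmU)
  obtain ⟨n, hn⟩ := hev.exists
  have h1 : m ≤ P n m := hmmin _ hn
  have h2 : P n m = m := le_antisymm (hle m n) h1
  exact Set.mem_iUnion.2 ⟨n, h2 ▸ hinto n m⟩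
end

section
/- Let γ : [0,i) → (clopen subsets of G) be strictly increasing on an initial segment of a well-ordered set, with V(j) = ∪_{k ≤ j} γ(k) clopen for each j < i. Then the open set V(i) = ∪_{k < i} γ(k) is missing at most one limit point; if x is such a missing limit point, then there exists an increasing sequence s_1 < s_2 < ... cofinal in [0,i), and for any cofinal increasing sequence (t_n) and any choice x_n ∈ γ(t_n), the sequence x_n converges to x and x = sup V(i). -/
open Filter Topology

lemma aux_extraction6 {G : Type*} [TopologicalSpace G]
    {J : Type*} [LinearOrder J] {i : J} {γ : J → Set G}
    (hVclopen : ∀ j, j < i → IsClopen (⋃ k ∈ {k | k ≤ j}, γ k))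
    {y : ℕ → G} {jy : ℕ → J} {p : G}
    (hjyi : ∀ k, jy k < i) (hyγ : ∀ k, y k ∈ γ (jy k))
    (hyp : Tendsto y atTop (𝓝 p)) (hpV : p ∉ ⋃ k ∈ {k | k < i}, γ k) :
    ∃ φ : ℕ → ℕ, StrictMono φ ∧ StrictMono (jy ∘ φ) ∧ ∀ j, j < i → ∃ n, j ≤ jy (φ n) := by
  have hfin : ∀ j, j < i → ∀ᶠ k in atTop, j < jy k := by
    intro j hj
    by_contra hcon
    rw [Filter.not_eventually] at hcon
    simp only [not_lt] at hcon
    obtain ⟨ψ, hψ, hψle⟩ := Filter.extraction_of_frequently_atTop hcon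
    have hmem : ∀ n, y (ψ n) ∈ ⋃ k ∈ {k | k ≤ j}, γ k := fun n =>
      Set.mem_biUnion (hψle n) (hyγ (ψ n))
    have hpmem : p ∈ ⋃ k ∈ {k | k ≤ j}, γ k :=
      (hVclopen j hj).isClosed.mem_of_tendsto (hyp.comp hψ.tendsto_atTop)
        (Filter.Eventually.of_forall hmem)
    apply hpV
    simp only [Set.mem_iUnion, Set.mem_setOf_eq] at hpmem ⊢
    obtain ⟨k, hk, hm⟩ := hpmem
    exact ⟨k, lt_of_le_of_lt hk hj, hm⟩
  have hstep : ∀ m : ℕ, ∃ k, m < k ∧ jy m < jy k := by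
    intro m
    obtain ⟨K, hK⟩ := (Filter.eventually_atTop).1 (hfin (jy m) (hjyi m))
    exact ⟨max K (m+1), lt_of_lt_of_le (Nat.lt_succ_self m) (le_max_right _ _),
      hK _ (le_max_left _ _)⟩
  let f : ℕ → ℕ := fun n => Nat.rec (motive := fun _ => ℕ) 0 (fun _ ih => (hstep ih).choose) n
  have hf1 : ∀ n, f n < f (n+1) := fun n => ((hstep (f n)).choose_spec).1
  have hf2 : ∀ n, jy (f n) < jy (f (n+1)) := fun n => ((hstep (f n)).choose_spec).2
  refine ⟨f, strictMono_nat_of_lt_succ hf1, strictMono_nat_of_lt_succ hf2, ?_⟩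
  intro j hj
  obtain ⟨K, hK⟩ := (Filter.eventually_atTop).1 (hfin j hj)
  exact ⟨K, le_of_lt (hK _ ((strictMono_nat_of_lt_succ hf1).le_apply))⟩

/-- Lemma `ezinc`: let `γ` be a strictly increasing assignment of clopen subsets
of `G` to the initial segment `[0,i)` of a well-ordered set `J`, such that
`V(j) = ⋃_{k ≤ j} γ(k)` is clopen for each `j < i`.  Then the open set
`V(i) = ⋃_{k < i} γ(k)` is missing at most one limit point `x`; for such an
`x` there is an increasing sequence cofinal in `[0,i)`, and for every cofinal
increasing sequence `(tₙ)` and every choice `xₙ ∈ γ(tₙ)`, the sequence `xₙ`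
converges to `x`, and `x = sup V(i)`. -/
theorem stmt_6 {G : Type*} [TopologicalSpace G] [SequentialSpace G] [T2Space G]
    [LinearOrder G]
    (hsup : ∀ s : ℕ → G, StrictMono s →
      (∀ φ : ℕ → ℕ, StrictMono φ → ¬ ∃ l : G, Tendsto (fun k => s (φ k)) atTop (𝓝 l)) ∨
      (∃ l : G, Tendsto s atTop (𝓝 l) ∧ IsLUB (Set.range s) l))
    {J : Type*} [LinearOrder J] [WellFoundedLT J] (i : J)
    (γ : J → Set G)
    (hclopen : ∀ j, j < i → IsClopen (γ j))
    (hinc : ∀ s t, s < t → t < i → ∀ x ∈ γ s, ∀ y ∈ γ t, x < y)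
    (hVclopen : ∀ j, j < i → IsClopen (⋃ k ∈ {k | k ≤ j}, γ k)) :
    (closure (⋃ k ∈ {k | k < i}, γ k) \ (⋃ k ∈ {k | k < i}, γ k)).Subsingleton ∧
      ∀ x ∈ closure (⋃ k ∈ {k | k < i}, γ k) \ (⋃ k ∈ {k | k < i}, γ k),
        (∃ s : ℕ → J, StrictMono s ∧ (∀ n, s n < i) ∧ ∀ j, j < i → ∃ n, j ≤ s n) ∧
        (∀ t : ℕ → J, StrictMono t → (∀ n, t n < i) → (∀ j, j < i → ∃ n, j ≤ t n) →
          ∀ xs : ℕ → G, (∀ n, xs n ∈ γ (t n)) → Tendsto xs atTop (𝓝 x)) ∧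
        IsLUB (⋃ k ∈ {k | k < i}, γ k) x := by
  classical
  set V : Set G := ⋃ k ∈ {k | k < i}, γ k with hVdef
  have hVmem : ∀ a : G, a ∈ V ↔ ∃ j, j < i ∧ a ∈ γ j := by
    intro a
    simp [hVdef, Set.mem_iUnion, Set.mem_setOf_eq]
  by_cases hx0 : ∃ x, x ∈ closure V \ V
  swap
  · constructor
    · intro a ha b hb
      exact absurd ⟨a, ha⟩ hx0
    · intro x hx
      exact absurd ⟨x, hx⟩ hx0
  obtain ⟨x₀, hx₀⟩ := hx0
  have hVnc : ¬ IsClosed V := fun h => hx₀.2 (h.closure_eq ▸ hx₀.1)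
  have hex : ∃ (y : ℕ → G) (p : G), (∀ n, y n ∈ V) ∧ Tendsto y atTop (𝓝 p) ∧ p ∉ V := by
    by_contra hcon
    push_neg at hcon
    have hsc : IsSeqClosed V := fun {u} {q} hu hq => hcon u q hu hq
    exact hVnc hsc.isClosed
  obtain ⟨y, p, hyV, hyp, hpV⟩ := hex
  choose jy hjyi hjyγ using fun n => (hVmem (y n)).1 (hyV n)
  obtain ⟨φ, hφ, hsφ, hcofφ⟩ := aux_extraction6 hVclopen hjyi hjyγ hyp hpV
  set s : ℕ → J := jy ∘ φ with hsdef
  set z : ℕ → G := y ∘ φ with hzdef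
  have hs : StrictMono s := hsφ
  have hsi : ∀ n, s n < i := fun n => hjyi _
  have hscof : ∀ j, j < i → ∃ n, j ≤ s n := hcofφ
  have hz : ∀ n, z n ∈ γ (s n) := fun n => hjyγ _
  have hzp : Tendsto z atTop (𝓝 p) := hyp.comp hφ.tendsto_atTop
  have hmono_of : ∀ (t : ℕ → J) (xs : ℕ → G), StrictMono t → (∀ n, t n < i) →
      (∀ n, xs n ∈ γ (t n)) → StrictMono xs := by
    intro t xs ht hti hxs
    exact strictMono_nat_of_lt_succ fun n =>
      hinc (t n) (t (n+1)) (ht (Nat.lt_succ_self n)) (hti (n+1)) _ (hxs n) _ (hxs (n+1))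
  have hcof' : ∀ (t : ℕ → J), StrictMono t → (∀ j, j < i → ∃ n, j ≤ t n) →
      ∀ j, j < i → ∃ n, j < t n := by
    intro t ht hcof j hj
    obtain ⟨n, hn⟩ := hcof j hj
    exact ⟨n+1, lt_of_le_of_lt hn (ht (Nat.lt_succ_self n))⟩
  have hzmono : StrictMono z := hmono_of s z hs hsi hz
  have hz_lub : IsLUB (Set.range z) p := by
    rcases hsup z hzmono with h | ⟨l, hl, hlub⟩
    · exact absurd ⟨p, hzp⟩ (h id strictMono_id)
    · exact tendsto_nhds_unique hl hzp ▸ hlub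
  have key : ∀ t : ℕ → J, StrictMono t → (∀ n, t n < i) → (∀ j, j < i → ∃ n, j ≤ t n) →
      ∀ xs : ℕ → G, (∀ n, xs n ∈ γ (t n)) → Tendsto xs atTop (𝓝 p) := by
    intro t ht hti htcof xs hxs
    have hs'' := hcof' s hs hscof
    have ht'' := hcof' t ht htcof
    have hstep : ∀ ab : ℕ × ℕ, ∃ ab' : ℕ × ℕ, t ab.2 < s ab'.1 ∧ s ab'.1 < t ab'.2 := by
      rintro ⟨a0, b0⟩
      obtain ⟨a', ha'⟩ := hs'' (t b0) (hti b0)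
      obtain ⟨b', hb'⟩ := ht'' (s a') (hsi a')
      exact ⟨(a', b'), ha', hb'⟩
    let A : ℕ → ℕ × ℕ := fun n =>
      Nat.rec (motive := fun _ => ℕ × ℕ) (hstep (0,0)).choose (fun _ ih => (hstep ih).choose) n
    have hA0 : s (A 0).1 < t (A 0).2 := (hstep (0,0)).choose_spec.2
    have hA1 : ∀ n, t (A n).2 < s (A (n+1)).1 := fun n => (hstep (A n)).choose_spec.1
    have hA2 : ∀ n, s (A (n+1)).1 < t (A (n+1)).2 := fun n => (hstep (A n)).choose_spec.2
    have hAst : ∀ n, s (A n).1 < t (A n).2 := by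
      intro n
      cases n with
      | zero => exact hA0
      | succ m => exact hA2 m
    set a : ℕ → ℕ := fun n => (A n).1 with hadef
    set b : ℕ → ℕ := fun n => (A n).2 with hbdef
    have hamono : StrictMono a :=
      strictMono_nat_of_lt_succ fun n => hs.lt_iff_lt.mp (lt_trans (hAst n) (hA1 n))
    have hbmono : StrictMono b :=
      strictMono_nat_of_lt_succ fun n => ht.lt_iff_lt.mp (lt_trans (hA1 n) (hAst (n+1)))
    set w : ℕ → G := fun n => if n % 2 = 0 then z (a (n/2)) else xs (b (n/2)) with hwdef
    have hweven : ∀ m, w (2*m) = z (a m) := by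
      intro m
      have h1 : (2*m) % 2 = 0 := by omega
      have h2 : (2*m) / 2 = m := by omega
      simp [hwdef, h1, h2]
    have hwodd : ∀ m, w (2*m+1) = xs (b m) := by
      intro m
      have h1 : (2*m+1) % 2 = 1 := by omega
      have h2 : (2*m+1) / 2 = m := by omega
      simp [hwdef, h1, h2]
    have hwmono : StrictMono w := by
      apply strictMono_nat_of_lt_succ
      intro n
      rcases Nat.even_or_odd n with ⟨m, hm⟩ | ⟨m, hm⟩
      · have h1 : n = 2*m := by omega
        subst h1
        rw [hweven m, show 2*m+1 = 2*m+1 from rfl, hwodd m]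
        exact hinc _ _ (hAst m) (hti (b m)) _ (hz (a m)) _ (hxs (b m))
      · have h1 : n = 2*m+1 := by omega
        subst h1
        rw [hwodd m, show 2*m+1+1 = 2*(m+1) by ring, hweven (m+1)]
        exact hinc _ _ (hA1 m) (hsi (a (m+1))) _ (hxs (b m)) _ (hz (a (m+1)))
    have hemono : StrictMono (fun m : ℕ => 2*m) := strictMono_nat_of_lt_succ fun n => by omega
    have homono : StrictMono (fun m : ℕ => 2*m+1) := strictMono_nat_of_lt_succ fun n => by omega
    have hwe : (fun m => w (2*m)) = fun m => z (a m) := funext hweven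
    have hwo : (fun m => w (2*m+1)) = fun m => xs (b m) := funext hwodd
    have hzan : Tendsto (fun m => z (a m)) atTop (𝓝 p) := hzp.comp hamono.tendsto_atTop
    rcases hsup w hwmono with h | ⟨l, hl, _⟩
    · exact absurd ⟨p, hwe ▸ hzan⟩ (h (fun m => 2*m) hemono)
    · have hle : Tendsto (fun m => w (2*m)) atTop (𝓝 l) := hl.comp hemono.tendsto_atTop
      have hlp : l = p := tendsto_nhds_unique (hwe ▸ hle) hzan
      have hlo : Tendsto (fun m => w (2*m+1)) atTop (𝓝 l) := hl.comp homono.tendsto_atTop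
      have hxb : Tendsto (fun m => xs (b m)) atTop (𝓝 p) := by
        rw [← hlp, ← hwo]; exact hlo
      have hxsm : StrictMono xs := hmono_of t xs ht hti hxs
      rcases hsup xs hxsm with h | ⟨l', hl', _⟩
      · exact absurd ⟨p, hxb⟩ (h b hbmono)
      · have hxl' : Tendsto (fun m => xs (b m)) atTop (𝓝 l') := hl'.comp hbmono.tendsto_atTop
        rwa [tendsto_nhds_unique hxl' hxb] at hl'
  have hplub : IsLUB V p := by
    constructor
    · intro v hv
      obtain ⟨j, hj, hvj⟩ := (hVmem v).1 hv
      obtain ⟨n, hn⟩ := hcof' s hs hscof j hj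
      exact le_of_lt (lt_of_lt_of_le (hinc j (s n) hn (hsi n) v hvj _ (hz n))
        (hz_lub.1 ⟨n, rfl⟩))
    · intro bnd hbnd
      refine hz_lub.2 ?_
      rintro g ⟨n, rfl⟩
      exact hbnd ((hVmem (z n)).2 ⟨s n, hsi n, hz n⟩)
  have hclsub : closure V ⊆ V ∪ {p} := by
    have hseq : IsSeqClosed (V ∪ {p} : Set G) := by
      intro u q hu huq
      by_cases hfreq : ∃ᶠ n in atTop, u n = p
      · obtain ⟨ψ, hψ, hψp⟩ := Filter.extraction_of_frequently_atTop hfreq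
        have h1 : Tendsto (fun n => u (ψ n)) atTop (𝓝 q) := huq.comp hψ.tendsto_atTop
        have h2 : (fun n => u (ψ n)) = fun _ => p := funext hψp
        have hqp : q = p := tendsto_nhds_unique h1 (h2 ▸ tendsto_const_nhds)
        exact Or.inr (by simp [hqp])
      · rw [Filter.not_frequently] at hfreq
        by_cases hqV : q ∈ V
        · exact Or.inl hqV
        obtain ⟨N, hN⟩ := Filter.eventually_atTop.1 hfreq
        set u' : ℕ → G := fun n => u (n + N) with hu'def
        have hu'V : ∀ n, u' n ∈ V := by
          intro n
          refine (hu (n+N)).resolve_right ?_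
          intro hmem
          exact hN (n+N) (Nat.le_add_left N n) (Set.mem_singleton_iff.1 hmem)
        have hu'q : Tendsto u' atTop (𝓝 q) := huq.comp (tendsto_add_atTop_nat N)
        choose ju hjui hjuγ using fun n => (hVmem (u' n)).1 (hu'V n)
        obtain ⟨ψ, hψ, hsψ, hcofψ⟩ := aux_extraction6 hVclopen hjui hjuγ hu'q hqV
        have hkey := key (ju ∘ ψ) hsψ (fun n => hjui _) hcofψ (u' ∘ ψ) (fun n => hjuγ _)
        have hq2 : Tendsto (u' ∘ ψ) atTop (𝓝 q) := hu'q.comp hψ.tendsto_atTop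
        have hqp : q = p := tendsto_nhds_unique hq2 hkey
        exact Or.inr (by simp [hqp])
    calc closure V ⊆ closure (V ∪ {p}) := closure_mono Set.subset_union_left
      _ = V ∪ {p} := hseq.isClosed.closure_eq
  have hxp : ∀ x ∈ closure V \ V, x = p := by
    intro x hx
    have := (hclsub hx.1).resolve_left hx.2
    exact Set.mem_singleton_iff.1 this
  refine ⟨fun a ha b hb => (hxp a ha).trans (hxp b hb).symm, ?_⟩
  intro x hx
  have hxeq := hxp x hx
  subst hxeq
  exact ⟨⟨s, hs, hsi, hscof⟩, key, hplub⟩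
end

section
/- If f : [0,i] → X is a function from a well-ordered set with cofinal increasing sequence such that the restriction of f to every increasing cofinal sequence t_1 < t_2 < ... in [0,i) is eventually constant, then f restricted to [0,i) is eventually constant (constant on some terminal segment [j, i)). -/
/-- Special case of Lemma `seqcont`: if `f : [0,i] → X` is a function from a
well-ordered set possessing an increasing sequence cofinal in `[0,i)`, and the
restriction of `f` to every increasing cofinal sequence in `[0,i)` is
eventually constant, then `f` restricted to `[0,i)` is eventually constant,
i.e. constant on some terminal segment `[j, i)`. -/
theorem stmt_9 {J : Type*} [LinearOrder J] [WellFoundedLT J] (i : J)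
    {X : Type*} (f : J → X)
    (hcof : ∃ s : ℕ → J, StrictMono s ∧ (∀ n, s n < i) ∧ ∀ j, j < i → ∃ n, j ≤ s n)
    (hconst : ∀ t : ℕ → J, StrictMono t → (∀ n, t n < i) → (∀ j, j < i → ∃ n, j ≤ t n) →
      ∃ N, ∀ m n, N ≤ m → N ≤ n → f (t m) = f (t n)) :
    ∃ j, j < i ∧ ∀ k, j ≤ k → k < i → f k = f j := by
  obtain ⟨s, hs, hsi, hscof⟩ := hcof
  by_contra hcon
  push_neg at hcon
  -- hcon : ∀ j, j < i → ∃ k, j ≤ k ∧ k < i ∧ f k ≠ f j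
  choose g hg1 hg2 hg3 using hcon
  choose m hm using hscof
  -- recursive sequence
  let T : ℕ → {x : J // x < i} := fun n =>
    Nat.rec ⟨s 0, hsi 0⟩
      (fun _ p => ⟨s (m (g p.1 p.2) (hg2 p.1 p.2) + 1), hsi _⟩) n
  have hT0 : T 0 = ⟨s 0, hsi 0⟩ := rfl
  have hTs : ∀ n, T (n + 1) =
      ⟨s (m (g (T n).1 (T n).2) (hg2 (T n).1 (T n).2) + 1), hsi _⟩ := fun n => rfl
  have hlt1 : ∀ n, (T n).1 < g (T n).1 (T n).2 := by
    intro n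
    refine lt_of_le_of_ne (hg1 _ _) ?_
    intro e
    exact hg3 (T n).1 (T n).2 (by rw [← e])
  have hlt2 : ∀ n, g (T n).1 (T n).2 < (T (n + 1)).1 := by
    intro n
    rw [hTs]
    exact lt_of_le_of_lt (hm _ _) (hs (Nat.lt_succ_self _))
  have hge : ∀ n, s n ≤ (T n).1 := by
    intro n
    induction n with
    | zero => exact le_of_eq rfl
    | succ n ih =>
      rw [hTs]
      have h1 : s n ≤ s (m (g (T n).1 (T n).2) (hg2 (T n).1 (T n).2)) :=
        le_trans ih (le_trans (hg1 _ _) (hm _ _))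
      have h2 : n ≤ m (g (T n).1 (T n).2) (hg2 (T n).1 (T n).2) := hs.le_iff_le.mp h1
      exact hs.monotone (by omega)
  -- interleaved sequence
  set u : ℕ → J := fun n =>
    if n % 2 = 0 then (T (n / 2)).1 else g (T (n / 2)).1 (T (n / 2)).2 with hu
  have hu_even : ∀ a, u (2 * a) = (T a).1 := by
    intro a; simp only [hu]
    have h1 : (2 * a) % 2 = 0 := by omega
    have h2 : (2 * a) / 2 = a := by omega
    rw [h1, h2]; simp
  have hu_odd : ∀ a, u (2 * a + 1) = g (T a).1 (T a).2 := by
    intro a; simp only [hu]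
    have h1 : (2 * a + 1) % 2 = 1 := by omega
    have h2 : (2 * a + 1) / 2 = a := by omega
    rw [h1, h2]; simp
  have humono : StrictMono u := by
    apply strictMono_nat_of_lt_succ
    intro n
    rcases Nat.even_or_odd n with ⟨a, ha⟩ | ⟨a, ha⟩
    · have e1 : n = 2 * a := by omega
      rw [e1, hu_even a, hu_odd a]
      exact hlt1 a
    · have e1 : n = 2 * a + 1 := by omega
      rw [e1, show 2 * a + 1 + 1 = 2 * (a + 1) by omega, hu_odd a, hu_even (a + 1)]
      exact hlt2 a
  have hui : ∀ n, u n < i := by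
    intro n
    rcases Nat.even_or_odd n with ⟨a, ha⟩ | ⟨a, ha⟩
    · have e1 : n = 2 * a := by omega
      rw [e1, hu_even a]; exact (T a).2
    · have e1 : n = 2 * a + 1 := by omega
      rw [e1, hu_odd a]; exact hg2 _ _
  have hucof : ∀ j, j < i → ∃ n, j ≤ u n := by
    intro j hj
    refine ⟨2 * m j hj, ?_⟩
    rw [hu_even]
    exact le_trans (hm j hj) (hge _)
  obtain ⟨N, hN⟩ := hconst u humono hui hucof
  have := hN (2 * N) (2 * N + 1) (by omega) (by omega)
  rw [hu_even, hu_odd] at this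
  exact hg3 (T N).1 (T N).2 this.symm
end

section
/- In the inverse limit X_∞ = lim← X_n of discrete spaces under retraction bonding maps R_n : X_{n+1} → X_n, a strictly increasing sequence s_1 < s_2 < ... (with respect to the lexicographic order induced by well-orders on each X_n compatible with R_n ≤ id) either has every subsequence divergent, or converges to its supremum. -/
open Filter Topology

/-- The lexicographic strict order on compatible sequences: `x < y` iff at the
minimal coordinate where they differ, `x` is smaller. -/
def lexLt {X : ℕ → Type*} [∀ n, LT (X n)] (x y : ∀ n, X n) : Prop :=
  ∃ N, (∀ m, m < N → x m = y m) ∧ x N < y N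

private theorem lexLt_trans' {X : ℕ → Type*} [∀ n, LinearOrder (X n)]
    {x y z : ∀ n, X n} (h1 : lexLt x y) (h2 : lexLt y z) : lexLt x z := by
  obtain ⟨N1, e1, l1⟩ := h1
  obtain ⟨N2, e2, l2⟩ := h2
  rcases lt_trichotomy N1 N2 with h | h | h
  · exact ⟨N1, fun m hm => (e1 m hm).trans (e2 m (hm.trans h)), (e2 N1 h) ▸ l1⟩
  · subst h; exact ⟨N1, fun m hm => (e1 m hm).trans (e2 m hm), l1.trans l2⟩
  · exact ⟨N2, fun m hm => (e1 m (hm.trans h)).trans (e2 m hm),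
      (e1 N2 h).symm ▸ l2⟩

/-- In the inverse limit `X_∞ = lim← Xₙ` of well-ordered discrete spaces under
retraction bonding maps `Rₙ : X_{n+1} → Xₙ` (with inclusions `ιₙ : Xₙ → X_{n+1}`
and `ιₙ (Rₙ x) ≤ x`), a strictly increasing (for the lexicographic order)
sequence either has every subsequence divergent, or converges to its
supremum. -/
theorem stmt_14 {X : ℕ → Type*} [∀ n, LinearOrder (X n)] [∀ n, WellFoundedLT (X n)]
    [∀ n, TopologicalSpace (X n)] [∀ n, DiscreteTopology (X n)]
    (R : ∀ n, X (n + 1) → X n) (ι : ∀ n, X n → X (n + 1))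
    (hι : ∀ n, StrictMono (ι n))
    (hret : ∀ n (x : X n), R n (ι n x) = x)
    (hRle : ∀ n (x : X (n + 1)), ι n (R n x) ≤ x)
    (s : ℕ → {x : ∀ n, X n // ∀ n, R n (x (n + 1)) = x n})
    (hmono : ∀ k, lexLt (s k).1 (s (k + 1)).1) :
    (∀ φ : ℕ → ℕ, StrictMono φ →
        ¬ ∃ l : {x : ∀ n, X n // ∀ n, R n (x (n + 1)) = x n},
            Tendsto (fun k => s (φ k)) atTop (𝓝 l)) ∨
    (∃ l : {x : ∀ n, X n // ∀ n, R n (x (n + 1)) = x n},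
        Tendsto s atTop (𝓝 l) ∧
        (∀ k, lexLt (s k).1 l.1 ∨ s k = l) ∧
        (∀ b : {x : ∀ n, X n // ∀ n, R n (x (n + 1)) = x n},
          (∀ k, lexLt (s k).1 b.1 ∨ s k = b) → lexLt l.1 b.1 ∨ l = b)) := by
  by_cases hL : (∀ φ : ℕ → ℕ, StrictMono φ →
      ¬ ∃ l : {x : ∀ n, X n // ∀ n, R n (x (n + 1)) = x n},
          Tendsto (fun k => s (φ k)) atTop (𝓝 l))
  · exact Or.inl hL
  push_neg at hL
  obtain ⟨φ, hφ, l, hl⟩ := hL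
  right
  -- chain: strict lex increase between any two indices
  have hchain : ∀ k m, k < m → lexLt (s k).1 (s m).1 := by
    intro k m hkm
    induction m with
    | zero => omega
    | succ m ih =>
      rcases Nat.lt_succ_iff_lt_or_eq.mp hkm with h | h
      · exact lexLt_trans' (ih h) (hmono m)
      · subst h; exact hmono k
  -- coordinatewise convergence of the subsequence
  have hl' : ∀ n, ∀ᶠ k in atTop, (s (φ k)).1 n = l.1 n := by
    intro n
    rw [tendsto_subtype_rng, tendsto_pi_nhds] at hl
    have := hl n
    rwa [nhds_discrete, tendsto_pure] at this
  -- key step: if all coordinates below n eventually agree with l, so does coordinate n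
  have key : ∀ n, (∀ᶠ k in atTop, ∀ m, m < n → (s k).1 m = l.1 m) →
      ∀ᶠ k in atTop, (s k).1 n = l.1 n := by
    intro n hpre
    obtain ⟨K1, hK1⟩ := eventually_atTop.mp hpre
    have hcomb : ∀ᶠ k in atTop,
        (∀ m, m < n → (s (φ k)).1 m = l.1 m) ∧ (s (φ k)).1 n = l.1 n :=
      (hφ.tendsto_atTop.eventually hpre).and (hl' n)
    obtain ⟨K2, hK2⟩ := eventually_atTop.mp hcomb
    filter_upwards [eventually_ge_atTop (max K1 (φ K2))] with k hk
    have hkK1 : K1 ≤ k := le_trans (le_max_left _ _) hk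
    have hkφ : φ K2 ≤ k := le_trans (le_max_right _ _) hk
    have hle : (s k).1 n ≤ l.1 n := by
      set k' := max K2 (k + 1) with hk'
      have hk'K2 : K2 ≤ k' := le_max_left _ _
      have hkk' : k < φ k' :=
        lt_of_lt_of_le (lt_of_lt_of_le (Nat.lt_succ_self k)
          (le_trans (le_max_right _ _) (hφ.le_apply))) le_rfl
      obtain ⟨hpre', hcoord'⟩ := hK2 k' hk'K2
      obtain ⟨N, he, hlt⟩ := hchain k (φ k') hkk'
      rcases lt_trichotomy N n with h | h | h
      · exact absurd hlt (by rw [hK1 k hkK1 N h, hpre' N h]; exact lt_irrefl _)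
      · subst h; rw [hcoord'] at hlt; exact le_of_lt hlt
      · rw [he n h, hcoord']
    have hge : l.1 n ≤ (s k).1 n := by
      obtain ⟨hpre0, hcoord0⟩ := hK2 K2 le_rfl
      rcases eq_or_lt_of_le hkφ with h | h
      · rw [← h, hcoord0]
      · obtain ⟨N, he, hlt⟩ := hchain (φ K2) k h
        rcases lt_trichotomy N n with h' | h' | h'
        · exact absurd hlt (by rw [hpre0 N h', hK1 k hkK1 N h']; exact lt_irrefl _)
        · subst h'; rw [hcoord0] at hlt; exact le_of_lt hlt
        · rw [← he n h', hcoord0]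
    exact le_antisymm hle hge
  -- all coordinates eventually agree with l
  have convAll : ∀ n, ∀ᶠ k in atTop, ∀ m, m < n → (s k).1 m = l.1 m := by
    intro n
    induction n with
    | zero => filter_upwards with k m hm; omega
    | succ n ih =>
      filter_upwards [ih, key n ih] with k h1 h2 m hm
      rcases Nat.lt_succ_iff_lt_or_eq.mp hm with h | h
      · exact h1 m h
      · subst h; exact h2
  have conv : ∀ n, ∀ᶠ k in atTop, (s k).1 n = l.1 n :=
    fun n => (convAll (n + 1)).mono fun k h => h n (Nat.lt_succ_self n)
  refine ⟨l, ?_, ?_, ?_⟩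
  · rw [tendsto_subtype_rng, tendsto_pi_nhds]
    intro n
    rw [nhds_discrete, tendsto_pure]
    exact conv n
  · -- upper bound
    intro k
    by_cases h : (s k).1 = l.1
    · exact Or.inr (Subtype.ext h)
    · left
      have hex : ∃ n, (s k).1 n ≠ l.1 n := by
        by_contra hc; push_neg at hc; exact h (funext hc)
      set N := Nat.find hex with hN
      have hNe : (s k).1 N ≠ l.1 N := Nat.find_spec hex
      have hmin : ∀ m, m < N → (s k).1 m = l.1 m := by
        intro m hm
        by_contra hc
        exact absurd hm (not_lt.mpr (Nat.find_le hc))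
      obtain ⟨m, hm1, hm2⟩ := ((convAll (N + 1)).and (eventually_gt_atTop k)).exists
      obtain ⟨N', he, hlt⟩ := hchain k m hm2
      have hN'le : N' ≤ N := by
        by_contra hc
        push_neg at hc
        exact hNe ((he N hc).trans (hm1 N (Nat.lt_succ_self N)))
      rcases eq_or_lt_of_le hN'le with h' | h'
      · rw [h', hm1 N (Nat.lt_succ_self _)] at hlt
        exact ⟨N, hmin, hlt⟩
      · rw [hm1 N' (h'.trans (Nat.lt_succ_self N))] at hlt
        exact absurd hlt (by rw [hmin N' h']; exact lt_irrefl _)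
  · -- least upper bound
    intro b hb
    by_cases h : l.1 = b.1
    · exact Or.inr (Subtype.ext h)
    · left
      have hex : ∃ n, l.1 n ≠ b.1 n := by
        by_contra hc; push_neg at hc; exact h (funext hc)
      set N := Nat.find hex with hN
      have hNe : l.1 N ≠ b.1 N := Nat.find_spec hex
      have hmin : ∀ m, m < N → l.1 m = b.1 m := by
        intro m hm
        by_contra hc
        exact absurd hm (not_lt.mpr (Nat.find_le hc))
      rcases lt_or_gt_of_ne hNe with hlt | hgt
      · exact ⟨N, hmin, hlt⟩
      · exfalso
        obtain ⟨k, hk⟩ := (convAll (N + 1)).exists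
        have hkN : ∀ m, m ≤ N → (s k).1 m = l.1 m :=
          fun m hm => hk m (Nat.lt_succ_of_le hm)
        rcases hb k with hbk | hbk
        · obtain ⟨N', he, hlt⟩ := hbk
          have hN'le : N' ≤ N := by
            by_contra hc
            push_neg at hc
            have := he N hc
            rw [hkN N le_rfl] at this
            exact hNe this
          rcases eq_or_lt_of_le hN'le with h' | h'
          · rw [h', hkN N le_rfl] at hlt
            exact absurd hlt (not_lt.mpr (le_of_lt hgt))
          · rw [hkN N' (le_of_lt h')] at hlt
            rw [hmin N' h'] at hlt
            exact lt_irrefl _ hlt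
        · have : (s k).1 N = b.1 N := by rw [hbk]
          rw [hkN N le_rfl] at this
          exact hNe this
end

section
/- In the inverse limit X_∞ = lim← X_n of well-ordered discrete spaces under retraction bonding maps satisfying R_n(x) ≤ x, every nonempty closed subset B ⊆ X_∞ has a minimal element with respect to the lexicographic order. -/
open Filter Topology

/-- Successively shrink `B` by minimizing coordinate `n` at stage `n + 1`. -/
noncomputable def chainC {X : ℕ → Type*} [∀ n, LinearOrder (X n)] [∀ n, WellFoundedLT (X n)]
    {Y : Type*} (f : Y → ∀ n, X n) (B : Set Y) : ℕ → Set Y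
  | 0 => B
  | n + 1 => {x ∈ chainC f B n |
      ∀ h : ((fun y => f y n) '' chainC f B n).Nonempty,
        f x n = wellFounded_lt.min _ h}

/-- In the inverse limit `X_∞ = lim← Xₙ` of well-ordered discrete spaces under
retraction bonding maps satisfying `Rₙ(x) ≤ x`, every nonempty closed subset
`B ⊆ X_∞` has a minimal element with respect to the lexicographic order. -/
theorem stmt_15 {X : ℕ → Type*} [∀ n, LinearOrder (X n)] [∀ n, WellFoundedLT (X n)]
    [∀ n, TopologicalSpace (X n)] [∀ n, DiscreteTopology (X n)]
    (R : ∀ n, X (n + 1) → X n) (ι : ∀ n, X n → X (n + 1))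
    (hι : ∀ n, StrictMono (ι n))
    (hret : ∀ n (x : X n), R n (ι n x) = x)
    (hRle : ∀ n (x : X (n + 1)), ι n (R n x) ≤ x)
    (B : Set {x : ∀ n, X n // ∀ n, R n (x (n + 1)) = x n})
    (hB : IsClosed B) (hBne : B.Nonempty) :
    ∃ b ∈ B, ∀ x ∈ B, lexLt b.1 x.1 ∨ b = x := by
  classical
  let Y := {x : ∀ n, X n // ∀ n, R n (x (n + 1)) = x n}
  let C : ℕ → Set Y := chainC (fun y : Y => y.1) B
  have hstep : ∀ n, C (n + 1) ⊆ C n := fun n {x} hx => hx.1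
  have hmono : ∀ m n, m ≤ n → C n ⊆ C m := by
    intro m n hmn
    induction hmn with
    | refl => exact fun {x} hx => hx
    | step h ih => exact fun {x} hx => ih (hstep _ hx)
  have hsubB : ∀ n, C n ⊆ B := fun n => hmono 0 n (Nat.zero_le n)
  have hne : ∀ n, (C n).Nonempty := by
    intro n
    induction n with
    | zero => exact hBne
    | succ n ih =>
      have himg : ((fun y : Y => y.1 n) '' C n).Nonempty := ih.image _
      obtain ⟨x, hxC, hx⟩ := wellFounded_lt.min_mem _ himg
      exact ⟨x, hxC, fun h => hx⟩
  have himg : ∀ n, ((fun y : Y => y.1 n) '' C n).Nonempty := fun n => (hne n).image _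
  let a : ∀ n, X n := fun n => wellFounded_lt.min _ (himg n)
  have hcoord : ∀ n, ∀ x ∈ C (n + 1), x.1 n = a n := by
    intro n x hx
    exact hx.2 (himg n)
  have hcoord' : ∀ n m, m < n → ∀ x ∈ C n, x.1 m = a m := by
    intro n m hmn x hx
    exact hcoord m x (hmono (m + 1) n hmn hx)
  have hcompat : ∀ n, R n (a (n + 1)) = a n := by
    intro n
    obtain ⟨x, hx⟩ := hne (n + 2)
    have h1 : x.1 (n + 1) = a (n + 1) := hcoord (n + 1) x hx
    have h2 : x.1 n = a n := hcoord' (n + 2) n (by omega) x hx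
    rw [← h1, ← h2]
    exact x.2 n
  let b : Y := ⟨a, hcompat⟩
  -- b ∈ B using closedness
  have hchoose : ∀ n, ∃ x, x ∈ C (n + 1) := fun n => hne (n + 1)
  choose xs hxs using hchoose
  have htend : Tendsto xs atTop (𝓝 b) := by
    rw [tendsto_subtype_rng]
    rw [tendsto_pi_nhds]
    intro m
    have : ∀ᶠ n in atTop, (xs n).1 m = a m := by
      filter_upwards [eventually_ge_atTop m] with n hn
      exact hcoord m (xs n) (hmono (m + 1) (n + 1) (by omega) (hxs n))
    exact Tendsto.congr' (this.mono fun n h => h.symm) tendsto_const_nhds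
  have hbB : b ∈ B :=
    hB.mem_of_tendsto htend (Eventually.of_forall fun n => hsubB _ (hxs n))
  refine ⟨b, hbB, ?_⟩
  intro x hx
  by_cases hxb : x = b
  · exact Or.inr hxb.symm
  · left
    have hdiff : ∃ n, x.1 n ≠ a n := by
      by_contra h
      push_neg at h
      exact hxb (Subtype.ext (funext h))
    set N := Nat.find hdiff with hN
    have hNdiff : x.1 N ≠ a N := Nat.find_spec hdiff
    have hagree : ∀ m, m < N → x.1 m = a m := by
      intro m hm
      have := Nat.find_min hdiff hm
      push_neg at this
      exact this
    have hxC : ∀ k, k ≤ N → x ∈ C k := by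
      intro k hk
      induction k with
      | zero => exact hx
      | succ k ih =>
        refine ⟨ih (by omega), fun h => ?_⟩
        exact hagree k (by omega)
    have hmem : x.1 N ∈ (fun y : Y => y.1 N) '' C N := ⟨x, hxC N le_rfl, rfl⟩
    have hle : a N ≤ x.1 N := wellFounded_lt.min_le hmem
    refine ⟨N, fun m hm => (hagree m hm).symm, lt_of_le_of_ne hle (Ne.symm hNdiff)⟩
end

section
/- In the lexicographically ordered inverse limit X_∞ with retractions R_N : X_∞ → X_N, if x_1 < x_2 < x_3 where x_k ∈ X_{N_k} with N_k minimal, and R_{N_1}^{-1}(x_1) ⊇ R_{N_3}^{-1}(x_3), then R_{N_1}^{-1}(x_1) ⊇ R_{N_2}^{-1}(x_2); equivalently R_{N_1}(x_3) = x_1 implies R_{N_1}(x_2) = x_1. -/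
/-- `x ∈ X_∞` lies in (the copy of) `X_N` iff the coordinates of `x` are
obtained by the inclusions `ιₙ` from index `N` onward. -/
def evConstFrom {X : ℕ → Type*} (ι : ∀ n, X n → X (n + 1)) (x : ∀ n, X n) (N : ℕ) : Prop :=
  ∀ n, N ≤ n → x (n + 1) = ι n (x n)

/-- In the lexicographically ordered inverse limit `X_∞`, suppose
`x₁ < x₂ < x₃`, where `x_k ∈ X_{N_k}` with `N_k` minimal.  If
`R_{N₁}⁻¹(x₁) ⊇ R_{N₃}⁻¹(x₃)`, i.e. `R_{N₁}(x₃) = x₁` (the truncation of `x₃`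
at level `N₁` agrees with `x₁`), then `R_{N₁}(x₂) = x₂`, i.e. the truncation of
`x₂` at level `N₁` agrees with `x₁`. -/
theorem stmt_16 {X : ℕ → Type*} [∀ n, LinearOrder (X n)] [∀ n, WellFoundedLT (X n)]
    (R : ∀ n, X (n + 1) → X n) (ι : ∀ n, X n → X (n + 1))
    (hι : ∀ n, StrictMono (ι n))
    (hret : ∀ n (x : X n), R n (ι n x) = x)
    (hRle : ∀ n (x : X (n + 1)), ι n (R n x) ≤ x)
    (x₁ x₂ x₃ : {x : ∀ n, X n // ∀ n, R n (x (n + 1)) = x n})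
    (h12 : lexLt x₁.1 x₂.1) (h23 : lexLt x₂.1 x₃.1)
    (N₁ N₂ N₃ : ℕ)
    (hN₁ : evConstFrom ι x₁.1 N₁) (hN₁min : ∀ M, evConstFrom ι x₁.1 M → N₁ ≤ M)
    (hN₂ : evConstFrom ι x₂.1 N₂) (hN₂min : ∀ M, evConstFrom ι x₂.1 M → N₂ ≤ M)
    (hN₃ : evConstFrom ι x₃.1 N₃) (hN₃min : ∀ M, evConstFrom ι x₃.1 M → N₃ ≤ M)
    (htrunc : ∀ n, n ≤ N₁ → x₃.1 n = x₁.1 n) :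
    ∀ n, n ≤ N₁ → x₂.1 n = x₁.1 n := by
  obtain ⟨M, hM1, hM2⟩ := h12
  obtain ⟨K, hK1, hK2⟩ := h23
  have hNM : N₁ < M := by
    by_contra h
    push_neg at h
    rcases lt_trichotomy K M with hKM | hKM | hKM
    · have h1 : x₂.1 K = x₁.1 K := (hM1 K hKM).symm
      have h2 : x₃.1 K = x₁.1 K := htrunc K (hKM.le.trans h)
      exact absurd (h1 ▸ h2 ▸ hK2) (lt_irrefl _)
    · subst hKM
      have h2 : x₃.1 K = x₁.1 K := htrunc K h
      exact absurd (hM2.trans (h2 ▸ hK2)) (lt_irrefl _)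
    · have h1 : x₂.1 M = x₃.1 M := hK1 M hKM
      have h2 : x₃.1 M = x₁.1 M := htrunc M h
      exact absurd (h1 ▸ h2 ▸ hM2) (lt_irrefl _)
  exact fun n hn => (hM1 n (hn.trans_lt hNM)).symm
end

section
/- Let X_n be the free monoid on letters x_1, x_1^{-1}, ..., x_n, x_n^{-1}, R_n : X_{n+1} → X_n the map deleting all occurrences of x_{n+1}, x_{n+1}^{-1}, and X_∞ = lim← X_n. For each g in the quotient G of X_∞ (identifying words whose images in each free group G_n agree), the sequence σ_n(Π_n(g)) of maximally reduced representatives converges in X_∞; i.e., for each N, R_N(σ_n(Π_n(g))) is eventually constant in n. -/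
open Filter Topology

/-- Words: finite unreduced words in the letters `x_{i+1}^{±1}`, a letter being
a pair `(i, b)` with `b` recording the sign. -/
instance : TopologicalSpace (List (ℕ × Bool)) := ⊥

instance : DiscreteTopology (List (ℕ × Bool)) := ⟨rfl⟩

/-- `X_∞ = lim← Xₙ`, where `Xₙ` is the discrete free monoid on the letters
`x_1^{±1}, ..., x_n^{±1}` (letters of index `< n`) and the bonding retraction
`Rₙ : X_{n+1} → Xₙ` deletes all occurrences of the top generator pair. -/
def Xinf : Type :=
  {x : ℕ → List (ℕ × Bool) //
    (∀ n, ∀ l ∈ x n, l.1 < n) ∧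
    ∀ n, (x (n + 1)).filter (fun l => decide (l.1 < n)) = x n}

instance : TopologicalSpace Xinf :=
  inferInstanceAs (TopologicalSpace
    {x : ℕ → List (ℕ × Bool) //
      (∀ n, ∀ l ∈ x n, l.1 < n) ∧
      ∀ n, (x (n + 1)).filter (fun l => decide (l.1 < n)) = x n})

/-!
Let `wₘ` be the reduced word of `qₘ(Rₘ(x))`. For `N ≤ m ≤ m'`, deleting from `w_{m'}` the letters
of index `≥ m` gives a word representing `qₘ(Rₘ(x))`, which therefore reduces to `wₘ`. Free
reduction only deletes cancelling pairs `x_i^{±1} x_i^{∓1}`, so it can only lower the number of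
letters of index `< N`, and if it does not, it leaves the subword of those letters untouched. Hence
the count `c(wₘ, N)` is nondecreasing in `m ≥ N`; it is bounded by the length of `R_N(x)`, because
`wₘ` is a reduction of `Rₘ(x)`. Once the count is constant, so is `R_N(wₘ)`.
-/

namespace FreeGroup

variable {α : Type*} {L L' : List (α × Bool)}

theorem Red.Step.filter_fst (p : α → Bool) (h : Red.Step L L') :
    Red (L.filter (fun l => p l.1)) (L'.filter (fun l => p l.1)) := by
  cases h with
  | @not L₁ L₂ i b =>
    by_cases hi : p i
    · simpa [List.filter_append, hi] using (Red.Step.not (L₁ := L₁.filter (fun l => p l.1))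
        (L₂ := L₂.filter (fun l => p l.1)) (x := i) (b := b)).to_red
    · simpa [List.filter_append, hi] using Red.refl

theorem Red.filter_fst (p : α → Bool) (h : Red L L') :
    Red (L.filter (fun l => p l.1)) (L'.filter (fun l => p l.1)) := by
  induction h with
  | refl => exact Red.refl
  | tail _ hstep ih => exact ih.trans (hstep.filter_fst p)

theorem mk_filter_fst_eq [DecidableEq α] (p : α → Bool) (h : mk L = mk L') :
    mk (L.filter (fun l => p l.1)) = mk (L'.filter (fun l => p l.1)) := by
  obtain ⟨L'', hL, hL'⟩ := Red.exact.mp h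
  exact Red.exact.mpr ⟨_, hL.filter_fst p, hL'.filter_fst p⟩

theorem Red.countP_fst_le (p : α → Bool) (h : Red L L') :
    L'.countP (fun l => p l.1) ≤ L.countP (fun l => p l.1) :=
  h.sublist.countP_le

theorem Red.filter_fst_eq_of_countP_eq (p : α → Bool) (h : Red L L')
    (hc : L'.countP (fun l => p l.1) = L.countP (fun l => p l.1)) :
    L'.filter (fun l => p l.1) = L.filter (fun l => p l.1) := by
  refine ((h.filter_fst p).sublist).eq_of_length ?_
  simpa only [List.countP_eq_length_filter] using hc

end FreeGroup

theorem Nat.exists_forall_ge_eq_of_monotone_of_le {f : ℕ → ℕ} (hf : Monotone f) {B : ℕ}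
    (hB : ∀ n, f n ≤ B) : ∃ M, ∀ m, M ≤ m → f m = f M := by
  have hbdd : BddAbove (Set.range f) := ⟨B, by rintro _ ⟨n, rfl⟩; exact hB n⟩
  obtain ⟨M, hM⟩ := Nat.sSup_mem (Set.range_nonempty f) hbdd
  exact ⟨M, fun m hm => le_antisymm (hM ▸ le_csSup hbdd ⟨m, rfl⟩) (hf hm)⟩

theorem List.filter_filter_fst_lt {β : Type*} {N m : ℕ} (h : N ≤ m) (L : List (ℕ × β)) :
    (L.filter (fun l => decide (l.1 < m))).filter (fun l => decide (l.1 < N)) =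
      L.filter (fun l => decide (l.1 < N)) := by
  rw [List.filter_filter]
  congr 1
  funext l
  by_cases hl : l.1 < N
  · simp [hl, lt_of_lt_of_le hl h]
  · simp [hl]

namespace Xinf

open FreeGroup

theorem filter_of_le (x : Xinf) {N m : ℕ} (h : N ≤ m) :
    (x.1 m).filter (fun l => decide (l.1 < N)) = x.1 N := by
  induction m, h using Nat.le_induction with
  | base => exact List.filter_eq_self.mpr fun l hl => decide_eq_true (x.2.1 N l hl)
  | succ m hNm ih => rw [← ih, ← x.2.2 m, List.filter_filter_fst_lt hNm]

theorem red_filter_toWord (x : Xinf) {m m' : ℕ} (h : m ≤ m') :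
    Red (((mk (x.1 m')).toWord).filter (fun l => decide (l.1 < m))) (mk (x.1 m)).toWord := by
  have hmk : mk (((mk (x.1 m')).toWord).filter (fun l => decide (l.1 < m))) = mk (x.1 m) := by
    rw [mk_filter_fst_eq (fun i => decide (i < m)) mk_toWord, x.filter_of_le h]
  rw [← hmk, toWord_mk]
  exact reduce.red

variable (x : Xinf) {N m m' : ℕ}

theorem countP_toWord_le_length (hN : N ≤ m) :
    ((mk (x.1 m)).toWord).countP (fun l => decide (l.1 < N)) ≤ (x.1 N).length := by
  calc ((mk (x.1 m)).toWord).countP (fun l => decide (l.1 < N))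
      = (reduce (x.1 m)).countP (fun l => decide (l.1 < N)) := by rw [toWord_mk]
    _ ≤ (x.1 m).countP (fun l => decide (l.1 < N)) :=
      reduce.red.countP_fst_le (fun i => decide (i < N))
    _ = (x.1 N).length := by rw [List.countP_eq_length_filter, x.filter_of_le hN]

theorem countP_toWord_mono (hN : N ≤ m) (h : m ≤ m') :
    ((mk (x.1 m)).toWord).countP (fun l => decide (l.1 < N)) ≤
      ((mk (x.1 m')).toWord).countP (fun l => decide (l.1 < N)) := by
  have := (x.red_filter_toWord h).countP_fst_le (fun i => decide (i < N))
  simpa only [List.countP_eq_length_filter, List.filter_filter_fst_lt hN] using this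

theorem filter_toWord_eq_of_countP_eq (hN : N ≤ m) (h : m ≤ m')
    (hc : ((mk (x.1 m)).toWord).countP (fun l => decide (l.1 < N)) =
      ((mk (x.1 m')).toWord).countP (fun l => decide (l.1 < N))) :
    ((mk (x.1 m')).toWord).filter (fun l => decide (l.1 < N)) =
      ((mk (x.1 m)).toWord).filter (fun l => decide (l.1 < N)) := by
  rw [← List.filter_filter_fst_lt hN]
  refine (Red.filter_fst_eq_of_countP_eq (fun i => decide (i < N)) (x.red_filter_toWord h) ?_).symm
  simpa only [List.countP_eq_length_filter, List.filter_filter_fst_lt hN] using hc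

end Xinf

/-- Here `FreeGroup.mk (x.1 n)` is `Πₙ(g) = qₙ(Rₙ(x))` and `.toWord` is its reduced representative
`σₙ`. -/
theorem stmt_17 (x : Xinf) (N : ℕ) :
    ∃ M, ∀ m, M ≤ m →
      ((FreeGroup.mk (x.1 m)).toWord).filter (fun l => decide (l.1 < N)) =
      ((FreeGroup.mk (x.1 M)).toWord).filter (fun l => decide (l.1 < N)) := by
  obtain ⟨k, hk⟩ := Nat.exists_forall_ge_eq_of_monotone_of_le
    (f := fun k => ((FreeGroup.mk (x.1 (N + k))).toWord).countP (fun l => decide (l.1 < N)))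
    (fun k k' h => x.countP_toWord_mono (by omega) (by omega))
    (fun k => x.countP_toWord_le_length (by omega))
  refine ⟨N + k, fun m hm => ?_⟩
  obtain ⟨j, rfl⟩ := Nat.exists_eq_add_of_le hm
  refine x.filter_toWord_eq_of_countP_eq (by omega) hm ?_
  simpa only [Nat.add_assoc] using (hk (k + j) (by omega)).symm
end

section
/- With notation as in the Hawaiian-earring word model, the injection σ : G → X_∞ sending g to the limit of reduced representatives σ_n(Π_n(g)) satisfies: for every x ∈ X_∞ with q(x) = g and every N, the number of occurrences of x_N^{±1} in R_N(x) is at least the number of occurrences of x_N^{±1} in R_N(σ(g)). Moreover σ is injective but not continuous: the sequence x_1 x_n x_1^{-1} converges to the identity in G while σ(x_1 x_n x_1^{-1}) converges to the nonidentity word (x_1 x_1^{-1}, x_1 x_1^{-1}, ...) in X_∞. -/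
open Filter Topology

/-- The equivalence identifying words in `X_∞` with the same image in every
free group; the quotient is the Hawaiian earring group model `G`. -/
def qsetoid : Setoid Xinf :=
  ⟨fun u v => ∀ n, FreeGroup.mk (u.1 n) = FreeGroup.mk (v.1 n),
    ⟨fun _ _ => rfl, fun h n => (h n).symm, fun h1 h2 n => (h1 n).trans (h2 n)⟩⟩

/-- `cnt N w` = number of occurrences of the letters `x_{N+1}^{±1}` in `w`. -/
def cnt (N : ℕ) (w : List (ℕ × Bool)) : ℕ := (w.filter (fun l => decide (l.1 = N))).length

/-!
Coordinate `N` of `σ u` is, for all large `m`, the truncation to the generators of index `< N`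
of the free reduction of `u m`. Free reduction only deletes letters, so it cannot increase the
number of occurrences of any generator; and truncation maps free reductions to free reductions,
so `σ u` and `u` have the same image in every free group `Gₙ`. The words `x₁ x_{k+2} x₁⁻¹` are
reduced at every large level, so `σ` fixes them; coordinatewise they converge to
`(x₁x₁⁻¹, x₁x₁⁻¹, …)`, which is trivial in every `Gₙ` but is not the empty word.
-/

namespace FreeGroup.Red

variable {α : Type*} {L₁ L₂ : List (α × Bool)}

theorem filter_fst_s18 (p : α → Bool) (h : Red L₁ L₂) :
    Red (L₁.filter fun l => p l.1) (L₂.filter fun l => p l.1) := by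
  induction h with
  | refl => exact .refl
  | tail _ hstep ih =>
    refine ih.trans ?_
    cases hstep with
    | @not La Lb x b =>
      by_cases hx : p x
      · simpa [List.filter_append, hx] using Red.Step.not.to_red
      · simpa [List.filter_append, hx] using Red.refl

end FreeGroup.Red

theorem cnt_le_of_red (N : ℕ) {L₁ L₂ : List (ℕ × Bool)} (h : FreeGroup.Red L₁ L₂) :
    cnt N L₂ ≤ cnt N L₁ :=
  (h.sublist.filter _).length_le

theorem cnt_filter_lt_succ (N : ℕ) (w : List (ℕ × Bool)) :
    cnt N (w.filter fun l => decide (l.1 < N + 1)) = cnt N w := by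
  unfold cnt
  rw [List.filter_filter]
  congr 1
  refine List.filter_congr fun l _ => ?_
  by_cases h : l.1 = N <;> simp [h]

namespace Xinf

theorem filter_lt_of_le (u : Xinf) {n m : ℕ} (h : n ≤ m) :
    (u.1 m).filter (fun l => decide (l.1 < n)) = u.1 n := by
  induction m, h using Nat.le_induction with
  | base => exact List.filter_eq_self.2 fun l hl => by simpa using u.2.1 n l hl
  | succ m hnm ih =>
    rw [← ih, ← u.2.2 m, List.filter_filter]
    refine List.filter_congr fun l _ => ?_
    by_cases hl : l.1 < n
    · simp [hl, hl.trans_le hnm]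
    · simp [hl]

theorem mk_filter_toWord (u : Xinf) {n m : ℕ} (h : n ≤ m) :
    FreeGroup.mk (((FreeGroup.mk (u.1 m)).toWord).filter fun l => decide (l.1 < n)) =
      FreeGroup.mk (u.1 n) := by
  rw [FreeGroup.toWord_mk, ← u.filter_lt_of_le h]
  have hred := (FreeGroup.reduce.red (L := u.1 m)).filter_fst_s18 (· < n)
  exact (FreeGroup.Red.exact.2 ⟨_, hred, .refl⟩).symm

theorem tendsto_nhds_of_eventually_eq {ι : Type*} {l : Filter ι} {f : ι → Xinf} {p : Xinf}
    (h : ∀ n, ∀ᶠ k in l, (f k).1 n = p.1 n) : Tendsto f l (𝓝 p) := by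
  rw [show Tendsto f l (𝓝 p) ↔ _ from tendsto_subtype_rng, tendsto_pi_nhds]
  exact fun n => tendsto_const_nhds.congr' ((h n).mono fun _ hk => hk.symm)

end Xinf

def IsReducedWordSection (σq : Xinf → Xinf) : Prop :=
  ∀ u : Xinf, ∀ N, ∃ M, ∀ m, M ≤ m →
    (σq u).1 N = ((FreeGroup.mk (u.1 m)).toWord).filter (fun l => decide (l.1 < N))

namespace IsReducedWordSection

variable {σq : Xinf → Xinf}

theorem mk_apply (hσ : IsReducedWordSection σq) (u : Xinf) (n : ℕ) :
    FreeGroup.mk ((σq u).1 n) = FreeGroup.mk (u.1 n) := by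
  obtain ⟨M, hM⟩ := hσ u n
  rw [hM (max M n) (le_max_left M n), u.mk_filter_toWord (le_max_right M n)]

theorem cnt_apply_le (hσ : IsReducedWordSection σq) (u : Xinf) (N : ℕ) :
    cnt N ((σq u).1 (N + 1)) ≤ cnt N (u.1 (N + 1)) := by
  obtain ⟨M, hM⟩ := hσ u (N + 1)
  set m := max M (N + 1)
  calc cnt N ((σq u).1 (N + 1)) = cnt N (FreeGroup.reduce (u.1 m)) := by
        rw [hM m (le_max_left _ _), FreeGroup.toWord_mk, cnt_filter_lt_succ]
    _ ≤ cnt N (u.1 m) := cnt_le_of_red N FreeGroup.reduce.red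
    _ = cnt N (u.1 (N + 1)) := by
        rw [← cnt_filter_lt_succ, u.filter_lt_of_le (le_max_right _ _)]

theorem apply_eq_self (hσ : IsReducedWordSection σq) {u : Xinf}
    (hu : ∀ᶠ m in atTop, FreeGroup.IsReduced (u.1 m)) : σq u = u := by
  refine Subtype.ext (funext fun N => ?_)
  obtain ⟨M, hM⟩ := hσ u N
  obtain ⟨m, hm⟩ := (hu.and (eventually_ge_atTop (max M N))).exists
  rw [hM m ((le_max_left M N).trans hm.2), FreeGroup.toWord_mk, hm.1.reduce_eq,
    u.filter_lt_of_le ((le_max_right M N).trans hm.2)]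

end IsReducedWordSection

/-- Claims about the (discontinuous) injection `σ : G → X_∞` sending `g` to the
limit of reduced representatives (any function `σq` on `X_∞`, constant on
classes, whose coordinates are the eventual reduced filtered words):
(a) for every `x` with `q(x) = g` and every `N`, the number of occurrences of
`x_N^{±1}` in `R_N(x)` is at least the corresponding count for `σ(g)`;
(b) `σ` is injective (as a function on `G`);
(c) `σ` is not continuous: the words `e k = x₁ x_{k+2} x₁⁻¹` converge to the
identity `o` in the quotient `G`, while `σ(e k) = e k` converges in `X_∞` to
the nonidentity unreduced word `y = (x₁x₁⁻¹, x₁x₁⁻¹, ...) ≠ o`. -/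
theorem stmt_18 (σq : Xinf → Xinf)
    (hσ : ∀ u : Xinf, ∀ N, ∃ M, ∀ m, M ≤ m →
      (σq u).1 N = ((FreeGroup.mk (u.1 m)).toWord).filter (fun l => decide (l.1 < N))) :
    (∀ u : Xinf, ∀ N, cnt N ((σq u).1 (N + 1)) ≤ cnt N (u.1 (N + 1))) ∧
    (∀ u v : Xinf, σq u = σq v → ∀ n, FreeGroup.mk (u.1 n) = FreeGroup.mk (v.1 n)) ∧
    (∀ (e : ℕ → Xinf) (o y : Xinf),
      (∀ k n, (e k).1 n =
        ([(0, true), (k + 1, true), (0, false)] : List (ℕ × Bool)).filter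
          (fun l => decide (l.1 < n))) →
      (∀ n, o.1 n = []) →
      (∀ n, y.1 n =
        ([(0, true), (0, false)] : List (ℕ × Bool)).filter (fun l => decide (l.1 < n))) →
      Tendsto (fun k => Quotient.mk qsetoid (e k)) atTop (𝓝 (Quotient.mk qsetoid o)) ∧
      Tendsto (fun k => σq (e k)) atTop (𝓝 y) ∧ y ≠ o) := by
  have hσ : IsReducedWordSection σq := hσ
  refine ⟨hσ.cnt_apply_le, fun u v huv n => by rw [← hσ.mk_apply, huv, hσ.mk_apply], ?_⟩
  intro e o y he ho hy
  have hey : Tendsto e atTop (𝓝 y) :=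
    Xinf.tendsto_nhds_of_eventually_eq fun n => (eventually_ge_atTop n).mono fun k hk => by
      simp [he, hy, List.filter_cons, show ¬ k + 1 < n by omega]
  have hσe : ∀ k, σq (e k) = e k := fun k =>
    hσ.apply_eq_self <| (eventually_ge_atTop (k + 2)).mono fun m hm => by
      simp [he, show k + 1 < m by omega, show 0 < m by omega]
  have hyo : Quotient.mk qsetoid y = Quotient.mk qsetoid o := by
    refine Quotient.sound fun n => ?_
    rcases n with _ | n
    · simp [hy, ho]
    · simp [hy, ho]
      decide
  refine ⟨hyo ▸ (continuous_quotient_mk'.tendsto y).comp hey, by simpa only [hσe] using hey,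
    fun h => ?_⟩
  simpa [hy, ho] using congrArg (fun z : Xinf => z.1 1) h
end

section
/- A sequence (g_k) in G converges if and only if for every N the sequence Π_N(g_k) ∈ G_N is eventually constant and the sequence of reduced-word lifts (σ(g_k)) has compact closure in X_∞. (In particular, if (g_k) converges then both conditions hold, and conversely both conditions imply all subsequential limits of σ(g_k) are q-equivalent, so g_k converges in the quotient.) -/
open Filter Topology

/-!
If `g_k → l`, each `Π_N` is locally constant on `G`, so `Π_N(g_k)` is eventually constant.
The level-`N` word of `σ(g)` is a sublist of the level-`N` word of every representative of `g`;
hence along a subsequence on which these lengths tend to infinity, the `q`-classes of the terms form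
a locally finite family of closed sets, whose union is closed and saturated. It would have to
contain the limit `l`, which is impossible once the lengths exceed that of `σ(l)`. So every
coordinate of `σ(g_k)` takes finitely many values, and Tychonoff in the closed subspace
`X_∞ ⊆ ∏ X_n` gives compactness.

Conversely, at a cluster point `v` of `σ(g_k)` the level-`N` coordinate agrees with that of
infinitely many `σ(g_k)`, so `mk (v N)` is the eventual value of `Π_N(g_k)`. All cluster points
are therefore `q`-equivalent, and in a compact set this forces `g_k = q (σ g_k) → q v`.
-/

open Set

local notation "G" => Quotient qsetoid

namespace FreeGroup

theorem Red.filter_fst_s19 {α : Type*} {L₁ L₂ : List (α × Bool)} (p : α → Bool) (h : Red L₁ L₂) :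
    Red (L₁.filter fun l => p l.1) (L₂.filter fun l => p l.1) := by
  induction h with
  | refl => exact Red.refl
  | tail _ hstep ih =>
    refine ih.trans ?_
    obtain @⟨a, c, x, b⟩ := hstep
    by_cases hx : p x
    · simpa [List.filter_append, hx] using (Red.Step.not (L₁ := a.filter fun l => p l.1)
        (L₂ := c.filter fun l => p l.1) (x := x) (b := b)).to_red
    · simpa [List.filter_append, hx] using Red.refl

theorem mk_filter_fst_toWord {α : Type*} [DecidableEq α] (p : α → Bool) (L : List (α × Bool)) :
    mk ((mk L).toWord.filter fun l => p l.1) = mk (L.filter fun l => p l.1) := by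
  rw [toWord_mk]
  exact (Red.exact.2 ⟨_, (Red.filter_fst_s19 p reduce.red), Red.refl⟩).symm

end FreeGroup

theorem List.finite_setOf_forall_mem_length_le {α : Type*} {s : Set α} (hs : s.Finite) (C : ℕ) :
    {L : List α | (∀ a ∈ L, a ∈ s) ∧ L.length ≤ C}.Finite := by
  have := hs.to_subtype
  refine ((List.finite_length_le s C).image (List.map Subtype.val)).subset ?_
  rintro L ⟨hL, hC⟩
  lift L to List s using hL
  exact ⟨L, by simpa using hC, rfl⟩

theorem tendsto_comp_of_forall_mapClusterPt {ι X Y : Type*} [TopologicalSpace X]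
    [TopologicalSpace Y] {l : Filter ι} {K : Set X} (hK : IsCompact K) {x : ι → X}
    (hx : ∀ i, x i ∈ K) {f : X → Y} (hf : Continuous f) {y : Y}
    (h : ∀ v, MapClusterPt v l x → f v = y) : Tendsto (f ∘ x) l (𝓝 y) := by
  refine tendsto_nhds.2 fun U hU hyU => ?_
  by_contra hnot
  have hfreq : ∃ᶠ i in l, x i ∈ K ∩ f ⁻¹' Uᶜ :=
    (not_eventually.1 hnot).mono fun i hi => ⟨hx i, hi⟩
  obtain ⟨v, hv, hcl⟩ :=
    (hK.inter_right (hU.isClosed_compl.preimage hf)).exists_mapClusterPt_of_frequently hfreq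
  exact hv.2 (h v hcl ▸ hyU)

namespace Xinf

theorem continuous_coord (N : ℕ) : Continuous fun u : Xinf => u.1 N :=
  (continuous_apply N).comp continuous_subtype_val

theorem filter_coord (u : Xinf) {N m : ℕ} (h : N ≤ m) :
    (u.1 m).filter (fun l => decide (l.1 < N)) = u.1 N := by
  induction m, h using Nat.le_induction with
  | base => exact List.filter_eq_self.2 fun l hl => decide_eq_true (u.2.1 N l hl)
  | succ m hNm ih =>
    rw [← ih, ← u.2.2 m, List.filter_filter]
    refine List.filter_congr fun l _ => ?_
    by_cases hl : l.1 < N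
    · simp [hl, hl.trans_le hNm]
    · simp [hl]

theorem isClosed_range_val : IsClosed (range (Subtype.val : Xinf → ℕ → List (ℕ × Bool))) := by
  rw [Subtype.range_coe_subtype, ofPred_and, ofPred_forall, ofPred_forall]
  refine (isClosed_iInter fun n => ?_).inter (isClosed_iInter fun n => ?_)
  · exact (isClosed_discrete {L : List (ℕ × Bool) | ∀ l ∈ L, l.1 < n}).preimage
      (continuous_apply (A := fun _ => List (ℕ × Bool)) n)
  · exact isClosed_eq ((continuous_of_discreteTopology (f := fun L : List (ℕ × Bool) =>
      L.filter fun l => decide (l.1 < n))).comp (continuous_apply (n + 1))) (continuous_apply n)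

theorem isCompact_closure_of_finite_coords {S : Set Xinf}
    (hS : ∀ N, ((fun u : Xinf => u.1 N) '' S).Finite) : IsCompact (closure S) := by
  let K := (Subtype.val : Xinf → ℕ → List (ℕ × Bool)) ⁻¹'
    Set.pi univ fun N => (fun u : Xinf => u.1 N) '' S
  have hK : IsCompact K := Topology.IsInducing.subtypeVal.isCompact_preimage isClosed_range_val
    (isCompact_univ_pi fun N => (hS N).isCompact)
  have hKclosed : IsClosed K :=
    (isClosed_set_pi fun N _ => isClosed_discrete _).preimage continuous_subtype_val
  exact hK.of_isClosed_subset isClosed_closure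
    (closure_minimal (fun u hu N _ => mem_image_of_mem _ hu) hKclosed)

end Xinf

theorem isClosed_preimage_mk_singleton (g : G) : IsClosed (Quotient.mk qsetoid ⁻¹' {g}) := by
  induction g using Quotient.inductionOn with
  | h w =>
    have : Quotient.mk qsetoid ⁻¹' {Quotient.mk qsetoid w} =
        ⋂ n, (fun u : Xinf => u.1 n) ⁻¹' {L | FreeGroup.mk L = FreeGroup.mk (w.1 n)} := by
      ext u
      simp only [mem_preimage, mem_singleton_iff, Quotient.eq, mem_iInter, mem_ofPred_eq]
      rfl
    rw [this]
    exact isClosed_iInter fun n => (isClosed_discrete _).preimage (Xinf.continuous_coord n)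

theorem isOpen_setOf_proj_eq {P : ℕ → G → FreeGroup ℕ}
    (hP : ∀ (u : Xinf) (n : ℕ), P n (Quotient.mk qsetoid u) = FreeGroup.mk (u.1 n))
    (N : ℕ) (c : FreeGroup ℕ) : IsOpen {g : G | P N g = c} := by
  rw [← isQuotientMap_quotient_mk'.isOpen_preimage]
  change IsOpen {u : Xinf | P N (Quotient.mk qsetoid u) = c}
  simp only [hP]
  exact (isOpen_discrete {L | FreeGroup.mk L = c}).preimage (Xinf.continuous_coord N)

/-- The characterising property of the paper's `σ : G → X_∞`. -/
def IsReducedLift (σq : G → Xinf) : Prop :=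
  ∀ u : Xinf, ∀ N, ∃ M, ∀ m, M ≤ m →
    (σq (Quotient.mk qsetoid u)).1 N =
      ((FreeGroup.mk (u.1 m)).toWord).filter (fun l => decide (l.1 < N))

namespace IsReducedLift

variable {σq : G → Xinf}

theorem coord_sublist (hσ : IsReducedLift σq) (u : Xinf) (N : ℕ) :
    List.Sublist ((σq (Quotient.mk qsetoid u)).1 N) (u.1 N) := by
  obtain ⟨M, hM⟩ := hσ u N
  rw [hM (max M N) (le_max_left _ _), ← Xinf.filter_coord u (le_max_right M N),
    FreeGroup.toWord_mk]
  exact (FreeGroup.Red.sublist FreeGroup.reduce.red).filter _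

theorem mk_coord (hσ : IsReducedLift σq) (u : Xinf) (N : ℕ) :
    FreeGroup.mk ((σq (Quotient.mk qsetoid u)).1 N) = FreeGroup.mk (u.1 N) := by
  obtain ⟨M, hM⟩ := hσ u N
  rw [hM (max M N) (le_max_left _ _), FreeGroup.mk_filter_fst_toWord (fun i => decide (i < N)),
    Xinf.filter_coord u (le_max_right M N)]

theorem mk_section (hσ : IsReducedLift σq) (g : G) : Quotient.mk qsetoid (σq g) = g := by
  induction g using Quotient.inductionOn with
  | h u => exact Quotient.sound (hσ.mk_coord u)

theorem isClosed_range_of_tendsto_length (hσ : IsReducedLift σq) {ψ : ℕ → G} {N : ℕ}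
    (hψ : Tendsto (fun i => ((σq (ψ i)).1 N).length) atTop atTop) : IsClosed (range ψ) := by
  have hlf : LocallyFinite fun i => Quotient.mk qsetoid ⁻¹' {ψ i} := by
    intro v
    refine ⟨{u | u.1 N = v.1 N},
      ((isOpen_discrete {v.1 N}).preimage (Xinf.continuous_coord N)).mem_nhds rfl, ?_⟩
    have hfin : {i | ¬ (v.1 N).length < ((σq (ψ i)).1 N).length}.Finite := by
      rw [← eventually_cofinite, Nat.cofinite_eq_atTop]
      exact hψ.eventually_gt_atTop _
    refine hfin.subset ?_
    rintro i ⟨u, hu, huN⟩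
    rw [mem_preimage, mem_singleton_iff] at hu
    have := (hσ.coord_sublist u N).length_le
    rw [hu, show u.1 N = v.1 N from huN] at this
    exact this.not_gt
  rw [← isQuotientMap_quotient_mk'.isClosed_preimage, ← iUnion_singleton_eq_range,
    preimage_iUnion]
  exact hlf.isClosed_iUnion fun i => isClosed_preimage_mk_singleton (ψ i)

theorem finite_range_coord_of_tendsto (hσ : IsReducedLift σq) {gs : ℕ → G} {l : G}
    (hl : Tendsto gs atTop (𝓝 l)) (N : ℕ) : (range fun k => (σq (gs k)).1 N).Finite := by
  have hbdd : ∃ C, ∀ᶠ k in atTop, ((σq (gs k)).1 N).length ≤ C := by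
    by_contra! h
    obtain ⟨φ, hφ, hlen⟩ :=
      extraction_forall_of_frequently fun n => h (max n ((σq l).1 N).length)
    have hclosed := hσ.isClosed_range_of_tendsto_length (ψ := gs ∘ φ) (N := N)
      (tendsto_atTop_mono (fun n => (le_max_left _ _).trans (hlen n).le) tendsto_id)
    obtain ⟨i, hi⟩ := hclosed.mem_of_tendsto (hl.comp hφ.tendsto_atTop)
      (Eventually.of_forall fun i => mem_range_self i)
    exact (le_max_right _ _).not_gt (hi ▸ hlen i)
  obtain ⟨C, hC⟩ := hbdd
  obtain ⟨K, hK⟩ := eventually_atTop.1 hC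
  refine (((finite_Iio K).image fun k => (σq (gs k)).1 N).union
    (List.finite_setOf_forall_mem_length_le ((finite_Iio N).prod finite_univ) C)).subset ?_
  rintro _ ⟨k, rfl⟩
  rcases lt_or_ge k K with hk | hk
  · exact Or.inl (mem_image_of_mem _ hk)
  · exact Or.inr ⟨fun a ha => ⟨(σq (gs k)).2.1 N a ha, trivial⟩, hK k hk⟩

theorem mk_coord_eq_of_mapClusterPt (hσ : IsReducedLift σq) {P : ℕ → G → FreeGroup ℕ}
    (hP : ∀ (u : Xinf) (n : ℕ), P n (Quotient.mk qsetoid u) = FreeGroup.mk (u.1 n))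
    {gs : ℕ → G} {v : Xinf} (hv : MapClusterPt v atTop fun k => σq (gs k)) {N : ℕ}
    {c : FreeGroup ℕ} (hc : ∀ᶠ k in atTop, P N (gs k) = c) : FreeGroup.mk (v.1 N) = c := by
  have hfreq : ∃ᶠ k in atTop, (σq (gs k)).1 N ∈ ({v.1 N} : Set _) :=
    mapClusterPt_iff_frequently.1 (hv.continuousAt_comp (Xinf.continuous_coord N).continuousAt)
      _ ((isOpen_discrete _).mem_nhds rfl)
  obtain ⟨k, hk, hkc⟩ := (hfreq.and_eventually hc).exists
  rw [← hkc, ← hk, ← hP, hσ.mk_section]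

end IsReducedLift

/-- Claim 2 of Lemma `convcrit`: a sequence `(g_k)` in the quotient `G` of
`X_∞` (with the quotient topology) converges if and only if for every `N` the
sequence of projections `Π_N(g_k) ∈ G_N` is eventually constant and the
sequence of reduced-word lifts `σ(g_k)` has compact closure in `X_∞`.  Here
`P` is the family of induced projections `Π_N : G → G_N` and `σq : G → X_∞`
is the injection assigning to `g` the coordinatewise limit of reduced
representatives. -/
theorem stmt_19
    (P : ℕ → Quotient qsetoid → FreeGroup ℕ)
    (hP : ∀ (u : Xinf) (n : ℕ), P n (Quotient.mk qsetoid u) = FreeGroup.mk (u.1 n))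
    (σq : Quotient qsetoid → Xinf)
    (hσ : ∀ u : Xinf, ∀ N, ∃ M, ∀ m, M ≤ m →
      (σq (Quotient.mk qsetoid u)).1 N =
        ((FreeGroup.mk (u.1 m)).toWord).filter (fun l => decide (l.1 < N)))
    (gs : ℕ → Quotient qsetoid) :
    (∃ l, Tendsto gs atTop (𝓝 l)) ↔
      ((∀ N, ∃ M, ∀ k, M ≤ k → P N (gs k) = P N (gs M)) ∧
        IsCompact (closure (Set.range fun k => σq (gs k)))) := by
  have hσ : IsReducedLift σq := hσ
  constructor
  · rintro ⟨l, hl⟩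
    refine ⟨fun N => ?_, Xinf.isCompact_closure_of_finite_coords fun N => ?_⟩
    · obtain ⟨M, hM⟩ := eventually_atTop.1
        (hl.eventually ((isOpen_setOf_proj_eq hP N (P N l)).mem_nhds rfl))
      exact ⟨M, fun k hk => (hM k hk).trans (hM M le_rfl).symm⟩
    · rw [← range_comp]
      exact hσ.finite_range_coord_of_tendsto hl N
  · rintro ⟨hconst, hcpt⟩
    choose M hM using hconst
    have hc : ∀ N, ∀ᶠ k in atTop, P N (gs k) = P N (gs (M N)) :=
      fun N => eventually_atTop.2 ⟨M N, hM N⟩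
    have hmem : ∀ k, σq (gs k) ∈ closure (range fun k => σq (gs k)) :=
      fun k => subset_closure (mem_range_self k)
    obtain ⟨v, -, hv⟩ := hcpt.exists_mapClusterPt (f := atTop)
      (tendsto_principal.2 (Eventually.of_forall hmem))
    refine ⟨Quotient.mk qsetoid v, ?_⟩
    have hlim := tendsto_comp_of_forall_mapClusterPt (f := Quotient.mk qsetoid) hcpt hmem
      continuous_quotient_mk'
      fun w hw => Quotient.sound (s := qsetoid) fun N =>
        (hσ.mk_coord_eq_of_mapClusterPt hP hw (hc N)).trans
          (hσ.mk_coord_eq_of_mapClusterPt hP hv (hc N)).symm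
    simpa only [Function.comp_def, hσ.mk_section] using hlim
end
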